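/- Let X and Y be locally compact Hausdorff spaces, let E be a real Banach space, let F be a strictly convex real Banach space, and let T : C₀(X,E) → C₀(Y,F) be a linear isometry. Let x ∈ X, let μ ∈ E* be a unit functional with S_{x,μ} = {f ∈ C₀(X,E) : μ(f(x)) = ‖f‖ = 1} nonempty, and let y ∈ Y be such that there exists a unit ν ∈ F* with ν((Tf)(y)) = 1 for all f ∈ S_{x,μ}. Then for every f ∈ C₀(X,E) with f(x) = 0, one has (Tf)(y) = 0. -/

import Mathlib

/-!
Fix `g ∈ S_{x,μ}`. Given `f` with `f x = 0` and `ε > 0`, take an Urysohn bump `u` at `x`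
supported where `‖f‖ < ε`. For small `|t|` the functions `u • g + t • (1 - u) • f` lie in
`S_{x,μ}`, since pointwise they are convex combinations of points of the unit ball. Their images
at `y` are then unit vectors (they attain `ν = 1`), and `T(u • g) y` is the midpoint of the images
for `±t`; strict convexity of `F` forces `T((1 - u) • f) y = 0`. Hence
`‖T f y‖ = ‖T(u • f) y‖ ≤ ‖u • f‖ ≤ ε`.
-/

open scoped ZeroAtInfty BoundedContinuousFunction
open Set

namespace ZeroAtInftyContinuousMap

variable {X E : Type*} [TopologicalSpace X] [NormedAddCommGroup E]

lemma norm_apply_le (f : C₀(X, E)) (z : X) : ‖f z‖ ≤ ‖f‖ :=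
  norm_toBCF_eq_norm (f := f) ▸ f.toBCF.norm_coe_le_norm z

lemma norm_le {f : C₀(X, E)} {C : ℝ} (hC : 0 ≤ C) : ‖f‖ ≤ C ↔ ∀ z, ‖f z‖ ≤ C := by
  rw [← norm_toBCF_eq_norm]
  exact BoundedContinuousFunction.norm_le hC

variable [NormedSpace ℝ E]

noncomputable def bcfSMul (v : X →ᵇ ℝ) : C₀(X, E) →ₗ[ℝ] C₀(X, E) where
  toFun g :=
    { toFun := fun z => v z • g z
      continuous_toFun := v.continuous.smul g.continuous
      zero_at_infty' := by
        have hg := (tendsto_zero_iff_norm_tendsto_zero.mp g.zero_at_infty').const_mul ‖v‖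
        rw [mul_zero] at hg
        refine squeeze_zero_norm (fun z => ?_) hg
        rw [norm_smul]
        exact mul_le_mul_of_nonneg_right (v.norm_coe_le_norm z) (norm_nonneg _) }
  map_add' g h := by ext z; exact smul_add _ _ _
  map_smul' c g := by ext z; exact smul_comm _ _ _

@[simp] lemma bcfSMul_apply (v : X →ᵇ ℝ) (g : C₀(X, E)) (z : X) : bcfSMul v g z = v z • g z :=
  rfl

lemma exists_bump_norm_bcfSMul_le [LocallyCompactSpace X] [T2Space X] (f : C₀(X, E)) {x : X}
    {ε : ℝ} (hfx : ‖f x‖ < ε) :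
    ∃ u : X →ᵇ ℝ, u x = 1 ∧ (∀ z, u z ∈ Icc 0 1) ∧ ‖bcfSMul u f‖ ≤ ε := by
  have hU : IsOpen {z | ‖f z‖ < ε} := isOpen_lt (by fun_prop) continuous_const
  obtain ⟨u, hu1, hu0, -, hu⟩ := exists_continuous_one_zero_of_isCompact isCompact_singleton
    hU.isClosed_compl (disjoint_singleton_left.mpr (not_not.mpr hfx))
  have hu_norm (z : X) : ‖u z‖ ≤ 1 := by
    rw [Real.norm_of_nonneg (hu z).1]; exact (hu z).2
  refine ⟨.ofNormedAddCommGroup u u.continuous 1 hu_norm, hu1 rfl, hu,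
    (norm_le (norm_nonneg _ |>.trans hfx.le)).mpr fun z => ?_⟩
  rw [bcfSMul_apply, norm_smul]
  by_cases hz : ‖f z‖ < ε
  · exact (mul_le_of_le_one_left (norm_nonneg _) (hu_norm z)).trans hz.le
  · simp [hu0 hz, (norm_nonneg _).trans hfx.le]

/-- The set `S_{x,μ}` of the paper. -/
def peakSet (x : X) (μ : StrongDual ℝ E) : Set C₀(X, E) :=
  {f | μ (f x) = 1 ∧ ‖f‖ = 1}

lemma norm_eq_one_of_apply_eq_one {V : Type*} [SeminormedAddCommGroup V] [NormedSpace ℝ V]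
    {φ : StrongDual ℝ V} (hφ : ‖φ‖ ≤ 1) {v : V} (hv : ‖v‖ ≤ 1) (h : φ v = 1) : ‖v‖ = 1 := by
  refine hv.antisymm ?_
  calc (1 : ℝ) = ‖φ v‖ := by rw [h, norm_one]
    _ ≤ ‖φ‖ * ‖v‖ := φ.le_opNorm v
    _ ≤ ‖v‖ := mul_le_of_le_one_left (norm_nonneg v) hφ

lemma mem_peakSet_of_forall_norm_le {μ : StrongDual ℝ E} (hμ : ‖μ‖ ≤ 1) {x : X} {f : C₀(X, E)}
    (hfx : μ (f x) = 1) (hf : ∀ z, ‖f z‖ ≤ 1) : f ∈ peakSet x μ := by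
  have hf' : ‖f‖ ≤ 1 := (norm_le zero_le_one).mpr hf
  exact ⟨hfx, hf'.antisymm (norm_eq_one_of_apply_eq_one hμ (hf x) hfx ▸ f.norm_apply_le x)⟩

lemma bcfSMul_add_sub_mem_peakSet {μ : StrongDual ℝ E} (hμ : ‖μ‖ ≤ 1) {x : X} {g : C₀(X, E)}
    (hg : g ∈ peakSet x μ) {u : X →ᵇ ℝ} (hux : u x = 1) (hu : ∀ z, u z ∈ Icc 0 1)
    {f : C₀(X, E)} (hfx : f x = 0) (hf : ‖f‖ ≤ 1) :
    bcfSMul u g + (f - bcfSMul u f) ∈ peakSet x μ := by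
  refine mem_peakSet_of_forall_norm_le hμ (by simp [hux, hfx, hg.1]) fun z => ?_
  have hcomb : (bcfSMul u g + (f - bcfSMul u f)) z = u z • g z + (1 - u z) • f z := by
    simp only [add_apply, sub_apply, bcfSMul_apply]
    module
  have hball := convex_closedBall (0 : E) 1
    (mem_closedBall_zero_iff.mpr (hg.2 ▸ g.norm_apply_le z))
    (mem_closedBall_zero_iff.mpr ((f.norm_apply_le z).trans hf))
    (hu z).1 (sub_nonneg.mpr (hu z).2) (add_sub_cancel _ _)
  rwa [hcomb, ← mem_closedBall_zero_iff]

end ZeroAtInftyContinuousMap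

open ZeroAtInftyContinuousMap

lemma eq_zero_of_norm_add_eq_of_norm_sub_eq {F : Type*} [NormedAddCommGroup F] [NormedSpace ℝ F]
    [StrictConvexSpace ℝ F] {v w : F} (h₁ : ‖v + w‖ = ‖v‖) (h₂ : ‖v - w‖ = ‖v‖) : w = 0 := by
  have hsum : ‖(v + w) + (v - w)‖ = ‖v + w‖ + ‖v - w‖ := by
    rw [show (v + w) + (v - w) = (2 : ℝ) • v by module, norm_smul, h₁, h₂, Real.norm_two]
    ring
  have h := eq_of_norm_eq_of_norm_add_eq (h₁.trans h₂.symm) hsum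
  have h2w : (2 : ℝ) • w = 0 := by rw [two_smul]; linear_combination (norm := module) h
  exact (smul_eq_zero.mp h2w).resolve_left two_ne_zero

theorem apply_sub_bcfSMul_eq_zero {X Y E F : Type*} [TopologicalSpace X] [TopologicalSpace Y]
    [NormedAddCommGroup E] [NormedSpace ℝ E] [NormedAddCommGroup F] [NormedSpace ℝ F]
    [StrictConvexSpace ℝ F] (T : C₀(X, E) →ₗᵢ[ℝ] C₀(Y, F)) {x : X} {μ : StrongDual ℝ E}
    (hμ : ‖μ‖ ≤ 1) {y : Y} {ν : StrongDual ℝ F} (hν : ‖ν‖ ≤ 1)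
    (hQ : ∀ k ∈ peakSet x μ, ν (T k y) = 1) {g : C₀(X, E)} (hg : g ∈ peakSet x μ)
    {u : X →ᵇ ℝ} (hux : u x = 1) (hu : ∀ z, u z ∈ Icc 0 1) {f : C₀(X, E)} (hfx : f x = 0) :
    T (f - bcfSMul u f) y = 0 := by
  have hnorm (k : C₀(X, E)) (hk : k ∈ peakSet x μ) : ‖T k y‖ = 1 :=
    norm_eq_one_of_apply_eq_one hν ((T k).norm_apply_le y |>.trans_eq (T.norm_map k ▸ hk.2))
      (hQ k hk)
  have hkey (t : ℝ) (ht : ‖t • f‖ ≤ 1) :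
      ‖T (bcfSMul u g) y + t • T (f - bcfSMul u f) y‖ = 1 := by
    convert hnorm _ (bcfSMul_add_sub_mem_peakSet hμ hg hux hu (f := t • f) (by simp [hfx]) ht)
      using 2
    rw [map_smul, ← smul_sub, map_add, map_smul, ZeroAtInftyContinuousMap.add_apply,
      ZeroAtInftyContinuousMap.smul_apply]
  set s : ℝ := (‖f‖ + 1)⁻¹
  have hs : 0 < s := by positivity
  have hsf (t : ℝ) (ht : |t| = s) : ‖t • f‖ ≤ 1 := by
    rw [norm_smul, Real.norm_eq_abs, ht, inv_mul_le_iff₀ (by positivity)]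
    linarith
  have hcenter := hkey 0 (by simp)
  have hplus := hkey s (hsf s (abs_of_pos hs))
  have hminus := hkey (-s) (hsf (-s) (by rw [abs_neg, abs_of_pos hs]))
  rw [zero_smul, add_zero] at hcenter
  rw [neg_smul, ← sub_eq_add_neg] at hminus
  have h := eq_zero_of_norm_add_eq_of_norm_sub_eq (hplus.trans hcenter.symm)
    (hminus.trans hcenter.symm)
  exact (smul_eq_zero.mp h).resolve_left hs.ne'

theorem ker_evaluation_subset_general {X Y E F : Type*}
    [TopologicalSpace X] [LocallyCompactSpace X] [T2Space X]
    [TopologicalSpace Y]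
    [NormedAddCommGroup E] [NormedSpace ℝ E]
    [NormedAddCommGroup F] [NormedSpace ℝ F]
    (hF : ∀ x y : F, x ≠ y → ‖x‖ = 1 → ‖y‖ = 1 → ‖x + y‖ < 2)
    (T : C₀(X, E) →ₗᵢ[ℝ] C₀(Y, F))
    (x : X) (μ : StrongDual ℝ E) (hμ : ‖μ‖ = 1)
    (hS : ∃ f : C₀(X, E), μ (f x) = 1 ∧ ‖f‖ = 1)
    (y : Y) (ν : StrongDual ℝ F) (hν : ‖ν‖ = 1)
    (hQ : ∀ f : C₀(X, E), μ (f x) = 1 → ‖f‖ = 1 → ν (T f y) = 1) :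
    ∀ f : C₀(X, E), f x = 0 → T f y = 0 := by
  intro f hfx
  have : StrictConvexSpace ℝ F :=
    .of_norm_add_ne_two fun v w hv hw hvw => (hF v w hvw hv hw).ne
  obtain ⟨g, hg⟩ := hS
  refine norm_le_zero_iff.mp (le_of_forall_pos_le_add fun ε hε => ?_)
  obtain ⟨u, hux, hu, hfu⟩ :=
    exists_bump_norm_bcfSMul_le f (x := x) (ε := ε) (by simpa [hfx] using hε)
  have hkill := apply_sub_bcfSMul_eq_zero T hμ.le hν.le (fun k hk => hQ k hk.1 hk.2) hg hux hu hfx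
  have hsplit : T f y = T (bcfSMul u f) y + T (f - bcfSMul u f) y := by
    rw [← ZeroAtInftyContinuousMap.add_apply, ← map_add, add_sub_cancel]
  calc ‖T f y‖ = ‖T (bcfSMul u f) y‖ := by rw [hsplit, hkill, add_zero]
    _ ≤ ‖bcfSMul u f‖ := (T _).norm_apply_le y |>.trans_eq (T.norm_map _)
    _ ≤ 0 + ε := by rwa [zero_add]

/-- Kernel inclusion: if `F` is strictly convex, `T : C₀(X, E) → C₀(Y, F)` is a linear
isometry, `μ ∈ E*` is a unit functional with `S_{x,μ}` nonempty, and `y ∈ Q_{x,μ}`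
(witnessed by the unit functional `ν ∈ F*`), then `f x = 0` implies `(T f) y = 0`. -/
theorem ker_evaluation_subset {X Y E F : Type*}
    [TopologicalSpace X] [LocallyCompactSpace X] [T2Space X]
    [TopologicalSpace Y] [LocallyCompactSpace Y] [T2Space Y]
    [NormedAddCommGroup E] [NormedSpace ℝ E] [CompleteSpace E]
    [NormedAddCommGroup F] [NormedSpace ℝ F] [CompleteSpace F]
    (hF : ∀ x y : F, x ≠ y → ‖x‖ = 1 → ‖y‖ = 1 → ‖x + y‖ < 2)
    (T : C₀(X, E) →ₗᵢ[ℝ] C₀(Y, F))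
    (x : X) (μ : StrongDual ℝ E) (hμ : ‖μ‖ = 1)
    (hS : ∃ f : C₀(X, E), μ (f x) = 1 ∧ ‖f‖ = 1)
    (y : Y) (ν : StrongDual ℝ F) (hν : ‖ν‖ = 1)
    (hQ : ∀ f : C₀(X, E), μ (f x) = 1 → ‖f‖ = 1 → ν (T f y) = 1) :
    ∀ f : C₀(X, E), f x = 0 → T f y = 0 :=
  ker_evaluation_subset_general hF T x μ hμ hS y ν hν hQ
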